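/- arXiv:2202.03463 — 4 statements merged into one kernel-verified Lean document; each statement's English description precedes it below -/
import Mathlib

section
/- Let P be a row-stochastic matrix on a finite nonempty set S and let λ_P be its ergodicity coefficient. Then for every function v : S → ℝ, span(Pv) ≤ λ_P · span(v), where (Pv)(s) = ∑_{z∈S} P(z|s) v(z). -/
/-- For `f : S → ℝ` on a finite nonempty set `S`, the span is
`max f - min f`. -/
noncomputable def fnSpan {S : Type*} [Fintype S] [Nonempty S] (f : S → ℝ) : ℝ :=
  Finset.univ.sup' Finset.univ_nonempty f - Finset.univ.inf' Finset.univ_nonempty f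

/-- The ergodicity (Dobrushin) coefficient of a row-stochastic matrix `P`
(where `P s z` is the probability of moving from `s` to `z`):
`λ_P = 1 − min_{s,s'} ∑_z min(P(z|s), P(z|s'))`. -/
noncomputable def ergCoeff {S : Type*} [Fintype S] [Nonempty S] (P : S → S → ℝ) : ℝ :=
  1 - Finset.univ.inf' Finset.univ_nonempty
        (fun ss : S × S => ∑ z, min (P ss.1 z) (P ss.2 z))

/-- For a row-stochastic matrix `P` on a finite nonempty set `S` with ergodicity
coefficient `λ_P`, for every `v : S → ℝ`, `span(Pv) ≤ λ_P · span(v)`. -/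
theorem stmt1 {S : Type*} [Fintype S] [Nonempty S]
    (P : S → S → ℝ)
    (hP0 : ∀ s z, 0 ≤ P s z) (hP1 : ∀ s, ∑ z, P s z = 1)
    (v : S → ℝ) :
    fnSpan (fun s => ∑ z, P s z * v z) ≤ ergCoeff P * fnSpan v := by
  set M := Finset.univ.sup' Finset.univ_nonempty v with hM
  set m := Finset.univ.inf' Finset.univ_nonempty v with hm
  have hvM : ∀ z : S, v z ≤ M := fun z => Finset.le_sup' v (Finset.mem_univ z)
  have hvm : ∀ z : S, m ≤ v z := fun z => Finset.inf'_le v (Finset.mem_univ z)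
  have hspan : fnSpan v = M - m := rfl
  obtain ⟨s0⟩ := ‹Nonempty S›
  have hspan0 : 0 ≤ M - m := by linarith [hvM s0, hvm s0]
  have key : ∀ s s' : S,
      (∑ z, P s z * v z) - (∑ z, P s' z * v z) ≤ ergCoeff P * (M - m) := by
    intro s s'
    set c := ∑ z, min (P s z) (P s' z) with hc
    have hlam : 1 - c ≤ ergCoeff P := by
      have : Finset.univ.inf' Finset.univ_nonempty
          (fun ss : S × S => ∑ z, min (P ss.1 z) (P ss.2 z)) ≤ c :=
        Finset.inf'_le _ (Finset.mem_univ (s, s'))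
      unfold ergCoeff
      linarith
    have hnn1 : ∀ z : S, 0 ≤ P s z - min (P s z) (P s' z) := fun z => by
      simp [min_le_left]
    have hnn2 : ∀ z : S, 0 ≤ P s' z - min (P s z) (P s' z) := fun z => by
      simp [min_le_right]
    have sum1 : ∑ z, (P s z - min (P s z) (P s' z)) = 1 - c := by
      rw [Finset.sum_sub_distrib, hP1 s]
    have sum2 : ∑ z, (P s' z - min (P s z) (P s' z)) = 1 - c := by
      rw [Finset.sum_sub_distrib, hP1 s']
    have h1 : ∑ z, (P s z - min (P s z) (P s' z)) * v z ≤ (1 - c) * M := by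
      calc ∑ z, (P s z - min (P s z) (P s' z)) * v z
          ≤ ∑ z, (P s z - min (P s z) (P s' z)) * M :=
            Finset.sum_le_sum fun z _ => mul_le_mul_of_nonneg_left (hvM z) (hnn1 z)
        _ = (1 - c) * M := by rw [← Finset.sum_mul, sum1]
    have h2 : (1 - c) * m ≤ ∑ z, (P s' z - min (P s z) (P s' z)) * v z := by
      calc (1 - c) * m = ∑ z, (P s' z - min (P s z) (P s' z)) * m := by
            rw [← Finset.sum_mul, sum2]
        _ ≤ ∑ z, (P s' z - min (P s z) (P s' z)) * v z :=
            Finset.sum_le_sum fun z _ => mul_le_mul_of_nonneg_left (hvm z) (hnn2 z)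
    have hdiff : (∑ z, P s z * v z) - (∑ z, P s' z * v z)
        = (∑ z, (P s z - min (P s z) (P s' z)) * v z)
          - (∑ z, (P s' z - min (P s z) (P s' z)) * v z) := by
      rw [← Finset.sum_sub_distrib, ← Finset.sum_sub_distrib]
      congr 1; funext z; ring
    rw [hdiff]
    have : (1 - c) * (M - m) ≤ ergCoeff P * (M - m) :=
      mul_le_mul_of_nonneg_right hlam hspan0
    nlinarith
  rw [hspan]
  unfold fnSpan
  rw [sub_le_iff_le_add]
  apply Finset.sup'_le
  intro s _
  have h : (∑ z, P s z * v z) - ergCoeff P * (M - m) ≤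
      Finset.univ.inf' Finset.univ_nonempty (fun s' => ∑ z, P s' z * v z) :=
    Finset.le_inf' _ _ (fun s' _ => by linarith [key s s'])
  linarith
end

section
/- Let P be a row-stochastic matrix on a finite nonempty set S with ergodicity coefficient λ_P. Then for every t ∈ ℕ and every function v : S → ℝ, span(P^t v) ≤ λ_P^t · span(v), where P^t denotes the t-fold matrix power acting on v by (Pv)(s) = ∑_{z∈S} P(z|s) v(z). -/
/-- The action of a transition matrix `P` on a function `v : S → ℝ`:
`(Pv)(s) = ∑_z P(z|s) v(z)`. -/
noncomputable def matApply {S : Type*} [Fintype S] (P : S → S → ℝ) (v : S → ℝ) : S → ℝ :=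
  fun s => ∑ z, P s z * v z

lemma fnSpan_nonneg {S : Type*} [Fintype S] [Nonempty S] (v : S → ℝ) : 0 ≤ fnSpan v := by
  obtain ⟨s⟩ := (inferInstance : Nonempty S)
  have h1 := Finset.inf'_le v (Finset.mem_univ s)
  have h2 := Finset.le_sup' v (Finset.mem_univ s)
  unfold fnSpan
  linarith

lemma ergCoeff_nonneg {S : Type*} [Fintype S] [Nonempty S] (P : S → S → ℝ)
    (hP1 : ∀ s, ∑ z, P s z = 1) : 0 ≤ ergCoeff P := by
  obtain ⟨s⟩ := (inferInstance : Nonempty S)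
  have h := Finset.inf'_le
      (fun ss : S × S => ∑ z, min (P ss.1 z) (P ss.2 z)) (Finset.mem_univ (s, s))
  simp only [min_self] at h
  rw [hP1 s] at h
  unfold ergCoeff
  linarith

lemma ergCoeff_step {S : Type*} [Fintype S] [Nonempty S]
    (P : S → S → ℝ)
    (hP0 : ∀ s z, 0 ≤ P s z) (hP1 : ∀ s, ∑ z, P s z = 1) (v : S → ℝ) :
    fnSpan (matApply P v) ≤ ergCoeff P * fnSpan v := by
  set M := Finset.univ.sup' Finset.univ_nonempty v with hM
  set m := Finset.univ.inf' Finset.univ_nonempty v with hm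
  have hspan : fnSpan v = M - m := rfl
  have hMm : 0 ≤ M - m := by have := fnSpan_nonneg v; rw [hspan] at this; exact this
  have key : ∀ s s', matApply P v s - matApply P v s' ≤ ergCoeff P * (M - m) := by
    intro s s'
    set μ := fun z => min (P s z) (P s' z) with hμ
    set c := ∑ z, μ z with hc
    have hlam : 1 - c ≤ ergCoeff P := by
      have := Finset.inf'_le
        (fun ss : S × S => ∑ z, min (P ss.1 z) (P ss.2 z)) (Finset.mem_univ (s, s'))
      unfold ergCoeff
      simp only at this
      linarith [this]
    have hcle : c ≤ 1 := by
      rw [hc, ← hP1 s]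
      exact Finset.sum_le_sum fun z _ => min_le_left _ _
    have hsum1 : ∑ z, (P s z - μ z) = 1 - c := by
      rw [Finset.sum_sub_distrib, hP1 s, hc]
    have hsum2 : ∑ z, (P s' z - μ z) = 1 - c := by
      rw [Finset.sum_sub_distrib, hP1 s', hc]
    have hub : ∑ z, (P s z - μ z) * v z ≤ (1 - c) * M := by
      calc ∑ z, (P s z - μ z) * v z ≤ ∑ z, (P s z - μ z) * M := by
            apply Finset.sum_le_sum
            intro z _
            exact mul_le_mul_of_nonneg_left (Finset.le_sup' v (Finset.mem_univ z))
              (by simp [hμ, min_le_left])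
        _ = (1 - c) * M := by rw [← Finset.sum_mul, hsum1]
    have hlb : (1 - c) * m ≤ ∑ z, (P s' z - μ z) * v z := by
      calc (1 - c) * m = ∑ z, (P s' z - μ z) * m := by rw [← Finset.sum_mul, hsum2]
        _ ≤ ∑ z, (P s' z - μ z) * v z := by
            apply Finset.sum_le_sum
            intro z _
            exact mul_le_mul_of_nonneg_left (Finset.inf'_le v (Finset.mem_univ z))
              (by simp [hμ, min_le_right])
    have hdiff : matApply P v s - matApply P v s'
        = ∑ z, (P s z - μ z) * v z - ∑ z, (P s' z - μ z) * v z := by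
      simp only [matApply, sub_mul, Finset.sum_sub_distrib]
      ring
    have h1 : matApply P v s - matApply P v s' ≤ (1 - c) * (M - m) := by
      rw [hdiff]
      nlinarith
    calc matApply P v s - matApply P v s' ≤ (1 - c) * (M - m) := h1
      _ ≤ ergCoeff P * (M - m) := mul_le_mul_of_nonneg_right hlam hMm
  rw [hspan]
  unfold fnSpan
  rw [sub_le_iff_le_add]
  apply Finset.sup'_le
  intro s _
  rw [← sub_le_iff_le_add']
  apply Finset.le_inf'
  intro s' _
  linarith [key s s']

/-- For a row-stochastic matrix `P` on a finite nonempty set `S` with ergodicity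
coefficient `λ_P`, for every `t : ℕ` and every `v : S → ℝ`,
`span(P^t v) ≤ λ_P^t · span(v)`. -/
theorem stmt2 {S : Type*} [Fintype S] [Nonempty S]
    (P : S → S → ℝ)
    (hP0 : ∀ s z, 0 ≤ P s z) (hP1 : ∀ s, ∑ z, P s z = 1)
    (t : ℕ) (v : S → ℝ) :
    fnSpan ((matApply P)^[t] v) ≤ ergCoeff P ^ t * fnSpan v := by
  induction t with
  | zero => simp
  | succ n ih =>
    rw [Function.iterate_succ_apply']
    calc fnSpan (matApply P ((matApply P)^[n] v))
        ≤ ergCoeff P * fnSpan ((matApply P)^[n] v) := ergCoeff_step P hP0 hP1 _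
      _ ≤ ergCoeff P * (ergCoeff P ^ n * fnSpan v) :=
          mul_le_mul_of_nonneg_left ih (ergCoeff_nonneg P hP1)
      _ = ergCoeff P ^ (n + 1) * fnSpan v := by ring
end

section
/- Let T₁, T₂, …, T_K be positive integers with ∑_{k=1}^{K} T_k ≤ T, and suppose the index set {1, …, K} is partitioned into γ consecutive blocks such that within each block the lengths strictly increase by at least one, i.e., if k and k+1 lie in the same block then T_{k+1} ≥ T_k + 1. Then K ≤ √(2γT). -/
lemma gauss_sq (n : ℕ) : n ^ 2 ≤ 2 * ∑ i ∈ Finset.Icc 1 n, i := by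
  induction n with
  | zero => simp
  | succ n ih =>
    rw [Finset.sum_Icc_succ_top (by omega)]
    ring_nf
    ring_nf at ih
    omega

/-- Episode-count bound (first step of the proof of the bound on the number of
episodes of RB-TSDE): let `T₁, …, T_K` be positive integers with
`∑_{k=1}^K T_k ≤ T`, and suppose `{1, …, K}` is partitioned into `γ`
consecutive blocks (described by a monotone block-label function
`c : {1, …, K} → {1, …, γ}`) such that whenever `k` and `k+1` lie in the same
block, `T_{k+1} ≥ T_k + 1`. Then `K ≤ √(2γT)`. -/
theorem stmt10 (K T γ : ℕ) (Tseq : ℕ → ℕ)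
    (hpos : ∀ k, 1 ≤ k → k ≤ K → 1 ≤ Tseq k)
    (hsum : ∑ k ∈ Finset.Icc 1 K, Tseq k ≤ T)
    (c : ℕ → ℕ)
    (hc_mono : ∀ k, 1 ≤ k → k + 1 ≤ K → c k ≤ c (k + 1))
    (hc_range : ∀ k, 1 ≤ k → k ≤ K → 1 ≤ c k ∧ c k ≤ γ)
    (hblock : ∀ k, 1 ≤ k → k + 1 ≤ K → c k = c (k + 1) →
      Tseq k + 1 ≤ Tseq (k + 1)) :
    (K : ℝ) ≤ Real.sqrt (2 * γ * T) := by
  set S : Finset ℕ := Finset.Icc 1 K with hS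
  set N : ℕ → ℕ := fun k => ((Finset.Icc 1 k).filter (fun j => c j = c k)).card with hNdef
  -- c is monotone on [1, K]
  have hmono : ∀ j k, 1 ≤ j → j ≤ k → k ≤ K → c j ≤ c k := by
    intro j k hj hjk hk
    obtain ⟨d, rfl⟩ := Nat.exists_eq_add_of_le hjk
    clear hjk
    induction d with
    | zero => exact le_rfl
    | succ d ih =>
      have h1 : j + d ≤ K := by omega
      exact le_trans (ih h1) (hc_mono (j + d) (by omega) (by omega))
  -- N k ≤ Tseq k
  have hN : ∀ k, 1 ≤ k → k ≤ K → N k ≤ Tseq k := by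
    intro k hk
    induction k, hk using Nat.le_induction with
    | base =>
      intro h1
      have : N 1 ≤ 1 := by
        have : ((Finset.Icc 1 1).filter (fun j => c j = c 1)).card ≤ (Finset.Icc 1 1).card :=
          Finset.card_le_card (Finset.filter_subset _ _)
        simpa [hNdef] using this
      exact le_trans this (hpos 1 le_rfl h1)
    | succ k hk ih =>
      intro hk1
      by_cases hcc : c k = c (k + 1)
      · have hfilter : (Finset.Icc 1 (k + 1)).filter (fun j => c j = c (k + 1))
            = insert (k + 1) ((Finset.Icc 1 k).filter (fun j => c j = c k)) := by
          ext j
          simp only [Finset.mem_filter, Finset.mem_insert, Finset.mem_Icc]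
          constructor
          · rintro ⟨⟨h1, h2⟩, h3⟩
            rcases Nat.lt_or_ge j (k + 1) with h | h
            · exact Or.inr ⟨⟨h1, by omega⟩, by rw [h3, hcc]⟩
            · exact Or.inl (by omega)
          · rintro (rfl | ⟨⟨h1, h2⟩, h3⟩)
            · exact ⟨⟨by omega, le_rfl⟩, rfl⟩
            · exact ⟨⟨h1, by omega⟩, by rw [h3, hcc]⟩
        have hnotmem : (k + 1) ∉ (Finset.Icc 1 k).filter (fun j => c j = c k) := by
          simp [Finset.mem_Icc]
        have hNk : N (k + 1) = N k + 1 := by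
          simp [hNdef, hfilter, Finset.card_insert_of_notMem hnotmem]
        rw [hNk]
        exact le_trans (Nat.add_le_add_right (ih (by omega)) 1)
          (hblock k hk hk1 hcc)
      · have hlt : c k < c (k + 1) :=
          lt_of_le_of_ne (hc_mono k hk hk1) hcc
        have hsub : (Finset.Icc 1 (k + 1)).filter (fun j => c j = c (k + 1)) ⊆ {k + 1} := by
          intro j hj
          simp only [Finset.mem_filter, Finset.mem_Icc] at hj
          obtain ⟨⟨h1, h2⟩, h3⟩ := hj
          simp only [Finset.mem_singleton]
          by_contra hne
          have hjk : j ≤ k := by omega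
          have := hmono j k h1 hjk (by omega)
          omega
        have : N (k + 1) ≤ 1 := by
          simpa [hNdef] using Finset.card_le_card hsub
        exact le_trans this (hpos (k + 1) (by omega) hk1)
  -- sum of N over S is at most T
  have hNsum : ∑ k ∈ S, N k ≤ T := by
    refine le_trans (Finset.sum_le_sum ?_) hsum
    intro k hk
    rw [hS, Finset.mem_Icc] at hk
    exact hN k hk.1 hk.2
  -- per-block bound
  have hblockbound : ∀ v : ℕ,
      ((S.filter (fun k => c k = v)).card) ^ 2 ≤ 2 * ∑ k ∈ S.filter (fun k => c k = v), N k := by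
    intro v
    set B : Finset ℕ := S.filter (fun k => c k = v) with hB
    set n : ℕ := B.card with hn
    -- N is strictly monotone on B, hence injective
    have hinj : Set.InjOn N B := by
      have hsm : ∀ j ∈ B, ∀ k ∈ B, j < k → N j < N k := by
        intro j hj k hk hjk
        rw [hB, Finset.mem_filter, hS, Finset.mem_Icc] at hj hk
        have hcjk : c j = c k := by rw [hj.2, hk.2]
        have hss : (Finset.Icc 1 j).filter (fun i => c i = c j)
            ⊂ (Finset.Icc 1 k).filter (fun i => c i = c k) := by
          constructor
          · intro i hi
            simp only [Finset.mem_filter, Finset.mem_Icc] at hi ⊢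
            exact ⟨⟨hi.1.1, by omega⟩, by rw [hi.2, hcjk]⟩
          · intro hcon
            have hkmem : k ∈ (Finset.Icc 1 k).filter (fun i => c i = c k) := by
              simp [Finset.mem_Icc, hk.1.1]
            have := hcon hkmem
            simp only [Finset.mem_filter, Finset.mem_Icc] at this
            omega
        exact Finset.card_lt_card hss
      intro a ha b hb hab
      rcases lt_trichotomy a b with h | h | h
      · exact absurd hab (ne_of_lt (hsm a ha b hb h))
      · exact h
      · exact absurd hab.symm (ne_of_lt (hsm b hb a ha h))
    -- image of N on B is exactly Icc 1 n
    have himg : B.image N = Finset.Icc 1 n := by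
      apply Finset.eq_of_subset_of_card_le
      · intro m hm
        rw [Finset.mem_image] at hm
        obtain ⟨k, hk, rfl⟩ := hm
        rw [hB, Finset.mem_filter, hS, Finset.mem_Icc] at hk
        rw [Finset.mem_Icc]
        constructor
        · have : k ∈ (Finset.Icc 1 k).filter (fun j => c j = c k) := by
            simp [Finset.mem_Icc, hk.1.1]
          have := Finset.card_pos.mpr ⟨k, this⟩
          simpa [hNdef] using this
        · apply Finset.card_le_card
          intro j hj
          simp only [Finset.mem_filter, Finset.mem_Icc] at hj
          rw [hB, Finset.mem_filter, hS, Finset.mem_Icc]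
          exact ⟨⟨hj.1.1, le_trans hj.1.2 hk.1.2⟩, by rw [hj.2, hk.2]⟩
      · rw [Nat.card_Icc]
        have : (B.image N).card = n := Finset.card_image_of_injOn hinj
        omega
    have hsumeq : ∑ m ∈ Finset.Icc 1 n, m = ∑ k ∈ B, N k := by
      rw [← himg, Finset.sum_image (fun a ha b hb => hinj ha hb)]
    calc n ^ 2 ≤ 2 * ∑ m ∈ Finset.Icc 1 n, m := gauss_sq n
      _ = 2 * ∑ k ∈ B, N k := by rw [hsumeq]
  -- fiberwise decomposition
  have hmaps : ∀ k ∈ S, c k ∈ Finset.Icc 1 γ := by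
    intro k hk
    rw [hS, Finset.mem_Icc] at hk
    rw [Finset.mem_Icc]
    exact hc_range k hk.1 hk.2
  have hKsum : K = ∑ v ∈ Finset.Icc 1 γ, (S.filter (fun k => c k = v)).card := by
    have := Finset.card_eq_sum_card_fiberwise hmaps
    simpa [hS, Nat.card_Icc] using this
  have hfib : ∑ v ∈ Finset.Icc 1 γ, ∑ k ∈ S.filter (fun k => c k = v), N k = ∑ k ∈ S, N k :=
    Finset.sum_fiberwise_of_maps_to hmaps N
  -- total: ∑ n_v^2 ≤ 2T
  have htotal : ∑ v ∈ Finset.Icc 1 γ, ((S.filter (fun k => c k = v)).card) ^ 2 ≤ 2 * T := by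
    calc ∑ v ∈ Finset.Icc 1 γ, ((S.filter (fun k => c k = v)).card) ^ 2
        ≤ ∑ v ∈ Finset.Icc 1 γ, 2 * ∑ k ∈ S.filter (fun k => c k = v), N k :=
          Finset.sum_le_sum (fun v _ => hblockbound v)
      _ = 2 * ∑ v ∈ Finset.Icc 1 γ, ∑ k ∈ S.filter (fun k => c k = v), N k := by
          rw [Finset.mul_sum]
      _ = 2 * ∑ k ∈ S, N k := by rw [hfib]
      _ ≤ 2 * T := by omega
  -- Cauchy–Schwarz over ℝ and conclusion
  have hKsq : (K : ℝ) ^ 2 ≤ 2 * γ * T := by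
    have hcs : (∑ v ∈ Finset.Icc 1 γ, ((S.filter (fun k => c k = v)).card : ℝ)) ^ 2
        ≤ (Finset.Icc 1 γ).card * ∑ v ∈ Finset.Icc 1 γ, ((S.filter (fun k => c k = v)).card : ℝ) ^ 2 :=
      sq_sum_le_card_mul_sum_sq
    have h1 : (K : ℝ) = ∑ v ∈ Finset.Icc 1 γ, ((S.filter (fun k => c k = v)).card : ℝ) := by
      rw [hKsum]; push_cast; ring
    have h2 : ∑ v ∈ Finset.Icc 1 γ, ((S.filter (fun k => c k = v)).card : ℝ) ^ 2 ≤ 2 * T := by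
      have := htotal
      push_cast [← Nat.cast_sum] at *
      exact_mod_cast this
    have h3 : ((Finset.Icc 1 γ).card : ℝ) = γ := by rw [Nat.card_Icc]; push_cast; ring
    calc (K : ℝ) ^ 2 = (∑ v ∈ Finset.Icc 1 γ, ((S.filter (fun k => c k = v)).card : ℝ)) ^ 2 := by
          rw [h1]
      _ ≤ (Finset.Icc 1 γ).card * ∑ v ∈ Finset.Icc 1 γ, ((S.filter (fun k => c k = v)).card : ℝ) ^ 2 := hcs
      _ ≤ γ * (2 * T) := by
          rw [h3]
          exact mul_le_mul_of_nonneg_left h2 (by positivity)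
      _ = 2 * γ * T := by ring
  have h0 : (0 : ℝ) ≤ 2 * γ * T := by positivity
  rcases Nat.eq_zero_or_pos K with hK0 | hK0
  · rw [hK0]; push_cast; exact Real.sqrt_nonneg _
  · have hKpos : (0 : ℝ) < K := by exact_mod_cast hK0
    exact (Real.le_sqrt' hKpos).mpr hKsq
end

section
/- Let (X, d) be a finite nonempty metric space. Let P assign to each x ∈ X a probability distribution P(·|x) on X, let r : X → ℝ, let J ∈ ℝ, and let V : X → ℝ satisfy the Bellman equation V(x) = r(x) − J + ∑_{z∈X} P(z|x) V(z) for all x ∈ X. Suppose r is L_r-Lipschitz and the kernel is L_p-Lipschitz in Kantorovich distance, i.e., K(P(·|x), P(·|y)) ≤ L_p · d(x, y) for all x, y ∈ X, with L_p < 1. Then V is Lipschitz with constant L_r/(1 − L_p), i.e., |V(x) − V(y)| ≤ (L_r/(1 − L_p)) · d(x, y) for all x, y ∈ X. -/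
/-!
Let `L` be the best Lipschitz constant of `V`, attained on some pair of points since `X` is
finite. Subtracting the Bellman equations at `x` and `y`, the reward contributes at most
`L_r d(x, y)`, and testing the Kantorovich distance against `V / L` bounds the expectation term
by `L L_p d(x, y)`. Hence `L ≤ L_r + L_p L`, i.e. `L ≤ L_r / (1 - L_p)`.
-/

noncomputable def kantorovich {X : Type*} [MetricSpace X] [Fintype X]
    (γ ζ : X → ℝ) : ℝ :=
  sSup { r : ℝ | ∃ g : X → ℝ, (∀ x y, |g x - g y| ≤ dist x y) ∧
    r = |(∑ x, g x * γ x) - ∑ x, g x * ζ x| }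

open Finset

section Kantorovich

variable {X : Type*} [Fintype X] {γ ζ : X → ℝ}

lemma sum_sub_const_mul_sub_sum_sub_const_mul (hγζ : ∑ x, γ x = ∑ x, ζ x) (g : X → ℝ)
    (c : ℝ) :
    ∑ x, (g x - c) * γ x - ∑ x, (g x - c) * ζ x = ∑ x, g x * γ x - ∑ x, g x * ζ x := by
  simp only [sub_mul, sum_sub_distrib, ← mul_sum, hγζ]
  ring

variable [MetricSpace X]

lemma abs_sum_mul_le_sum_dist_mul (hγ0 : ∀ x, 0 ≤ γ x) {g : X → ℝ}
    (hg : ∀ x y, |g x - g y| ≤ dist x y) (x₀ : X) :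
    |∑ x, (g x - g x₀) * γ x| ≤ ∑ x, dist x x₀ * γ x :=
  (abs_sum_le_sum_abs _ _).trans <| sum_le_sum fun x _ => by
    rw [abs_mul, abs_of_nonneg (hγ0 x)]
    exact mul_le_mul_of_nonneg_right (hg x x₀) (hγ0 x)

lemma bddAbove_kantorovich [Nonempty X] (hγ0 : ∀ x, 0 ≤ γ x) (hζ0 : ∀ x, 0 ≤ ζ x)
    (hγζ : ∑ x, γ x = ∑ x, ζ x) :
    BddAbove { r : ℝ | ∃ g : X → ℝ, (∀ x y, |g x - g y| ≤ dist x y) ∧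
      r = |(∑ x, g x * γ x) - ∑ x, g x * ζ x| } := by
  obtain ⟨x₀⟩ := ‹Nonempty X›
  refine ⟨∑ x, dist x x₀ * γ x + ∑ x, dist x x₀ * ζ x, ?_⟩
  rintro _ ⟨g, hg, rfl⟩
  rw [← sum_sub_const_mul_sub_sum_sub_const_mul hγζ g (g x₀)]
  exact (abs_sub _ _).trans <| add_le_add (abs_sum_mul_le_sum_dist_mul hγ0 hg x₀)
    (abs_sum_mul_le_sum_dist_mul hζ0 hg x₀)

lemma abs_sum_mul_sub_le_kantorovich [Nonempty X] (hγ0 : ∀ x, 0 ≤ γ x) (hζ0 : ∀ x, 0 ≤ ζ x)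
    (hγζ : ∑ x, γ x = ∑ x, ζ x) {g : X → ℝ} (hg : ∀ x y, |g x - g y| ≤ dist x y) :
    |∑ x, g x * γ x - ∑ x, g x * ζ x| ≤ kantorovich γ ζ :=
  le_csSup (bddAbove_kantorovich hγ0 hζ0 hγζ) ⟨g, hg, rfl⟩

lemma abs_sum_mul_sub_le_mul_kantorovich [Nonempty X] (hγ0 : ∀ x, 0 ≤ γ x)
    (hζ0 : ∀ x, 0 ≤ ζ x) (hγζ : ∑ x, γ x = ∑ x, ζ x) {g : X → ℝ} {L : ℝ} (hL : 0 ≤ L)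
    (hg : ∀ x y, |g x - g y| ≤ L * dist x y) :
    |∑ x, g x * γ x - ∑ x, g x * ζ x| ≤ L * kantorovich γ ζ := by
  rcases hL.eq_or_lt with rfl | hL
  · obtain ⟨x₀⟩ := ‹Nonempty X›
    have hconst : ∀ x, g x - g x₀ = 0 := fun x => abs_nonpos_iff.mp (by simpa using hg x x₀)
    simp [← sum_sub_const_mul_sub_sum_sub_const_mul hγζ g (g x₀), hconst]
  · have hgL : ∀ x y, |g x / L - g y / L| ≤ dist x y := fun x y => by
      rw [← sub_div, abs_div, abs_of_pos hL, div_le_iff₀' hL]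
      exact hg x y
    have h := abs_sum_mul_sub_le_kantorovich hγ0 hζ0 hγζ hgL
    simp only [div_mul_eq_mul_div, ← sum_div, ← sub_div, abs_div, abs_of_pos hL] at h
    rwa [div_le_iff₀' hL] at h

end Kantorovich

lemma abs_sub_le_mul_dist_of_lipschitz_bootstrap {X : Type*} [MetricSpace X] [Finite X] [Nonempty X]
    {V : X → ℝ} {a b : ℝ} (ha : 0 ≤ a) (hb : b < 1)
    (himp : ∀ L, 0 ≤ L → (∀ x y, |V x - V y| ≤ L * dist x y) →
      ∀ x y, |V x - V y| ≤ (a + b * L) * dist x y) :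
    ∀ x y, |V x - V y| ≤ a / (1 - b) * dist x y := by
  obtain ⟨p, hp⟩ := Finite.exists_max fun p : X × X => |V p.1 - V p.2| / dist p.1 p.2
  set L := |V p.1 - V p.2| / dist p.1 p.2
  have hL0 : 0 ≤ L := by positivity
  have hV : ∀ x y, |V x - V y| ≤ L * dist x y := fun x y => by
    rcases eq_or_ne x y with rfl | hxy
    · simp
    · exact (div_le_iff₀ (dist_pos.mpr hxy)).mp (hp (x, y))
  have hL : L ≤ a + b * L := by
    rcases eq_or_ne p.1 p.2 with hp12 | hp12
    · simp [L, hp12, ha]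
    · exact (div_le_iff₀ (dist_pos.mpr hp12)).mpr (himp L hL0 hV p.1 p.2)
  have hLab : L ≤ a / (1 - b) := by
    rw [le_div_iff₀ (sub_pos.mpr hb)]
    linarith
  exact fun x y => (hV x y).trans (mul_le_mul_of_nonneg_right hLab dist_nonneg)

theorem stmt14_general {X : Type*} [MetricSpace X] [Fintype X] [Nonempty X]
    (P : X → X → ℝ)
    (hP0 : ∀ x z, 0 ≤ P x z) (hP1 : ∀ x, ∑ z, P x z = 1)
    (r : X → ℝ) (J : ℝ) (V : X → ℝ)
    (hBellman : ∀ x, V x = r x - J + ∑ z, P x z * V z)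
    (Lr Lp : ℝ) (hLr : 0 ≤ Lr) (hLp : Lp < 1)
    (hr : ∀ x y, |r x - r y| ≤ Lr * dist x y)
    (hP : ∀ x y, kantorovich (P x) (P y) ≤ Lp * dist x y) :
    ∀ x y, |V x - V y| ≤ (Lr / (1 - Lp)) * dist x y := by
  refine abs_sub_le_mul_dist_of_lipschitz_bootstrap hLr hLp fun L hL hVL x y => ?_
  have hsplit : V x - V y = (r x - r y) + (∑ z, V z * P x z - ∑ z, V z * P y z) := by
    rw [hBellman x, hBellman y]
    simp only [mul_comm (V _)]
    ring
  have hexp : |∑ z, V z * P x z - ∑ z, V z * P y z| ≤ L * kantorovich (P x) (P y) :=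
    abs_sum_mul_sub_le_mul_kantorovich (hP0 x) (hP0 y) ((hP1 x).trans (hP1 y).symm) hL hVL
  calc |V x - V y| ≤ |r x - r y| + |∑ z, V z * P x z - ∑ z, V z * P y z| :=
        hsplit ▸ abs_add_le _ _
    _ ≤ Lr * dist x y + L * (Lp * dist x y) :=
        add_le_add (hr x y) (hexp.trans (mul_le_mul_of_nonneg_left (hP x y) hL))
    _ = (Lr + Lp * L) * dist x y := by ring

/-- Lemma 9 of the paper (via Hinderer): let `X` be a finite nonempty metric
space, `P` a row-stochastic kernel on `X`, `r : X → ℝ`, `J ∈ ℝ` and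
`V : X → ℝ` satisfying the Bellman equation
`V(x) = r(x) − J + ∑_z P(z|x) V(z)`. If `r` is `L_r`-Lipschitz and the kernel
is `L_p`-Lipschitz in Kantorovich distance with `L_p < 1`, then `V` is
`L_r/(1 − L_p)`-Lipschitz. -/
theorem stmt14 {X : Type*} [MetricSpace X] [Fintype X] [Nonempty X]
    (P : X → X → ℝ)
    (hP0 : ∀ x z, 0 ≤ P x z) (hP1 : ∀ x, ∑ z, P x z = 1)
    (r : X → ℝ) (J : ℝ) (V : X → ℝ)
    (hBellman : ∀ x, V x = r x - J + ∑ z, P x z * V z)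
    (Lr Lp : ℝ) (hLr : 0 ≤ Lr) (hLp0 : 0 ≤ Lp) (hLp : Lp < 1)
    (hr : ∀ x y, |r x - r y| ≤ Lr * dist x y)
    (hP : ∀ x y, kantorovich (P x) (P y) ≤ Lp * dist x y) :
    ∀ x y, |V x - V y| ≤ (Lr / (1 - Lp)) * dist x y :=
  stmt14_general P hP0 hP1 r J V hBellman Lr Lp hLr hLp hr hP
end
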